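/- arXiv:1010.3996 — 4 statements merged into one kernel-verified Lean document; each statement's English description precedes it below -/
import Mathlib

section
/- Let a ≠ 0, b, c be real numbers and let I be a bounded interval of the real line. Then the Lebesgue measure of {x ∈ ℝ : a·x² + b·x + c ∈ I} is at most 2 · |I|^{1/2} / |a|^{1/2}. -/
/-!
On each side of the vertex `-b / (2a)` the quadratic `f x = a x² + b x + c` is monotone and
satisfies `|f x - f y| ≥ |a| (x - y)²`. Since `I` is an interval, any two values of `f` on the
preimage differ by at most `|I|`, so on each side the preimage has diameter at most
`(|I| / |a|)^{1/2}`.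
-/

open MeasureTheory

theorem Set.OrdConnected.abs_sub_le_toReal_volume {I : Set ℝ} (hI : I.OrdConnected)
    (hIfin : volume I ≠ ⊤) {p q : ℝ} (hp : p ∈ I) (hq : q ∈ I) :
    |p - q| ≤ (volume I).toReal := by
  wlog hpq : q ≤ p generalizing p q
  · rw [abs_sub_comm]
    exact this hq hp (le_of_not_ge hpq)
  rw [abs_of_nonneg (sub_nonneg.mpr hpq), ← ENNReal.ofReal_le_iff_le_toReal hIfin,
    ← Real.volume_Icc]
  exact measure_mono (hI.out hq hp)

theorem abs_mul_sq_le_abs_sub_quadratic {a b c x y : ℝ}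
    (hside : 0 ≤ (2 * a * x + b) * (2 * a * y + b)) :
    |a| * (x - y) ^ 2 ≤ |(a * x ^ 2 + b * x + c) - (a * y ^ 2 + b * y + c)| := by
  have hfactor : (a * x ^ 2 + b * x + c) - (a * y ^ 2 + b * y + c)
      = (x - y) * (((2 * a * x + b) + (2 * a * y + b)) / 2) := by ring
  -- `|u - w| ≤ |u + w|` whenever `0 ≤ u * w`, for the slopes `u = 2ax + b`, `w = 2ay + b`.
  have hslope : |a * (x - y)| ≤ |((2 * a * x + b) + (2 * a * y + b)) / 2| := by
    rw [← sq_le_sq]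
    nlinarith
  rw [hfactor, abs_mul, ← sq_abs (x - y), sq, ← mul_assoc, mul_comm |a|, mul_assoc, ← abs_mul]
  exact mul_le_mul_of_nonneg_left hslope (abs_nonneg _)

theorem dist_le_sqrt_of_quadratic_mem {a b c : ℝ} (ha : a ≠ 0) {I : Set ℝ}
    (hI : I.OrdConnected) (hIfin : volume I ≠ ⊤) {x y : ℝ}
    (hx : a * x ^ 2 + b * x + c ∈ I) (hy : a * y ^ 2 + b * y + c ∈ I)
    (hside : 0 ≤ (2 * a * x + b) * (2 * a * y + b)) :
    dist x y ≤ √((volume I).toReal / |a|) := by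
  apply Real.abs_le_sqrt
  rw [le_div_iff₀ (abs_pos.mpr ha), mul_comm]
  exact (abs_mul_sq_le_abs_sub_quadratic hside).trans (hI.abs_sub_le_toReal_volume hIfin hx hy)

/-- For `a ≠ 0` and a bounded interval `I`, the Lebesgue measure of
`{x : a x² + b x + c ∈ I}` is at most `2 |I|^{1/2} / |a|^{1/2}`. -/
theorem measure_quadratic_preimage_le
    (a b c : ℝ) (ha : a ≠ 0)
    (I : Set ℝ) (hI : I.OrdConnected) (hIb : Bornology.IsBounded I) :
    volume {x : ℝ | a * x ^ 2 + b * x + c ∈ I} ≤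
      ENNReal.ofReal (2 * (volume I).toReal ^ ((1 : ℝ) / 2) / |a| ^ ((1 : ℝ) / 2)) := by
  set S := {x : ℝ | a * x ^ 2 + b * x + c ∈ I}
  set r := √((volume I).toReal / |a|)
  have hIfin : volume I ≠ ⊤ := hIb.measure_lt_top.ne
  have hhalf : ∀ H : Set ℝ, (∀ x ∈ H, ∀ y ∈ H, 0 ≤ (2 * a * x + b) * (2 * a * y + b)) →
      volume (S ∩ H) ≤ ENNReal.ofReal r := fun H hH =>
    (Real.volume_le_diam _).trans <| Metric.ediam_le_of_forall_dist_le
      fun x ⟨hx, hxH⟩ y ⟨hy, hyH⟩ =>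
        dist_le_sqrt_of_quadratic_mem ha hI hIfin hx hy (hH x hxH y hyH)
  have hcover : S ⊆ (S ∩ {x | 2 * a * x + b ≤ 0}) ∪ (S ∩ {x | 0 ≤ 2 * a * x + b}) :=
    fun x hx => (le_total (2 * a * x + b) 0).imp (⟨hx, ·⟩) (⟨hx, ·⟩)
  calc volume S ≤ ENNReal.ofReal r + ENNReal.ofReal r :=
        (measure_mono hcover).trans <| (measure_union_le _ _).trans <| add_le_add
          (hhalf _ fun _ hx _ hy => mul_nonneg_of_nonpos_of_nonpos hx hy)
          (hhalf _ fun _ hx _ hy => mul_nonneg hx hy)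
    _ = _ := by
      rw [← ENNReal.ofReal_add (Real.sqrt_nonneg _) (Real.sqrt_nonneg _),
        Real.sqrt_div' _ (abs_nonneg a), Real.sqrt_eq_rpow, Real.sqrt_eq_rpow]
      ring_nf
end

section
/- Let a ≠ 0, b, c be real numbers and let I be a bounded interval of the real line. Then the number of integers q ∈ ℤ with a·q² + b·q + c ∈ I is at most 2·(|I|^{1/2} / |a|^{1/2} + 1). -/
/-!
Completing the square, `a q² + b q + c = a (q + b/(2a))² + const`, so the values `(q + b/(2a))²`
at the integers `q` of the set differ pairwise by at most `|I| / |a|`, hence lie in a window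
`[s, s + |I| / |a|]`. Then `|q + b/(2a)| ∈ [√s, √s + √(|I| / |a|)]`, and each sign of
`q + b/(2a)` allows at most `√(|I| / |a|) + 1` integers.
-/

open MeasureTheory Set

theorem Real.le_sq_sqrt (x : ℝ) : x ≤ √x ^ 2 := by
  rcases le_total 0 x with hx | hx
  · rw [Real.sq_sqrt hx]
  · exact hx.trans (sq_nonneg _)

theorem Real.sqrt_add_le_add_sqrt (x y : ℝ) : √(x + y) ≤ √x + √y := by
  rw [Real.sqrt_le_iff]
  refine ⟨by positivity, ?_⟩
  nlinarith [Real.le_sq_sqrt x, Real.le_sq_sqrt y,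
    mul_nonneg (Real.sqrt_nonneg x) (Real.sqrt_nonneg y)]

theorem abs_sub_le_toReal_volume {I : Set ℝ} (hI : I.OrdConnected) (hIb : Bornology.IsBounded I)
    {x y : ℝ} (hx : x ∈ I) (hy : y ∈ I) : |x - y| ≤ (volume I).toReal := by
  have h : volume (uIcc y x) ≤ volume I := measure_mono (hI.uIcc_subset hy hx)
  rw [Real.volume_interval] at h
  exact (ENNReal.ofReal_le_iff_le_toReal hIb.measure_lt_top.ne).1 h

theorem exists_subset_Icc_add_of_forall_sub_le {S : Set ℝ} {d : ℝ}
    (h : ∀ x ∈ S, ∀ y ∈ S, x - y ≤ d) : ∃ s, S ⊆ Icc s (s + d) := by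
  rcases S.eq_empty_or_nonempty with rfl | ⟨y, hy⟩
  · exact ⟨0, empty_subset _⟩
  have hbdd : BddBelow S := ⟨y - d, fun x hx => by linarith [h y hy x hx]⟩
  refine ⟨sInf S, fun x hx => ⟨csInf_le hbdd hx, ?_⟩⟩
  have : x - d ≤ sInf S := le_csInf ⟨y, hy⟩ fun z hz => by linarith [h x hx z hz]
  linarith

theorem count_intCast_mem_Icc_le (x : ℝ) {ℓ : ℝ} (hℓ : 0 ≤ ℓ) :
    Measure.count {q : ℤ | (q : ℝ) ∈ Icc x (x + ℓ)} ≤ ENNReal.ofReal (ℓ + 1) := by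
  have hset : {q : ℤ | (q : ℝ) ∈ Icc x (x + ℓ)} = Finset.Icc ⌈x⌉ ⌊x + ℓ⌋ := by
    ext q
    simp [Int.ceil_le, Int.le_floor]
  rw [hset, Measure.count_apply_finset, Int.card_Icc, ← ENNReal.ofReal_natCast]
  apply ENNReal.ofReal_le_ofReal
  have hfloor : ((⌊x + ℓ⌋ : ℤ) : ℝ) ≤ x + ℓ := Int.floor_le _
  have hceil : x ≤ ((⌈x⌉ : ℤ) : ℝ) := Int.le_ceil _
  rw [← Int.cast_natCast, Int.toNat_eq_max]
  push_cast
  exact max_le (by linarith) (by linarith)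

theorem count_intCast_add_sq_mem_Icc_le (t s d : ℝ) :
    Measure.count {q : ℤ | ((q : ℝ) + t) ^ 2 ∈ Icc s (s + d)} ≤
      ENNReal.ofReal (2 * (√d + 1)) := by
  have hsub : {q : ℤ | ((q : ℝ) + t) ^ 2 ∈ Icc s (s + d)} ⊆
      {q : ℤ | (q : ℝ) ∈ Icc (√s - t) (√s - t + √d)} ∪
        {q : ℤ | (q : ℝ) ∈ Icc (-√s - √d - t) (-√s - √d - t + √d)} := by
    intro q hq
    have habs : √s ≤ |(q : ℝ) + t| ∧ |(q : ℝ) + t| ≤ √s + √d := by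
      rw [← Real.sqrt_sq_eq_abs]
      exact ⟨Real.sqrt_le_sqrt hq.1,
        (Real.sqrt_le_sqrt hq.2).trans (Real.sqrt_add_le_add_sqrt s d)⟩
    rcases le_or_gt 0 ((q : ℝ) + t) with hpos | hneg
    · rw [abs_of_nonneg hpos] at habs
      exact Or.inl ⟨by linarith, by linarith⟩
    · rw [abs_of_neg hneg] at habs
      exact Or.inr ⟨by linarith, by linarith⟩
  calc _ ≤ _ := measure_mono hsub
    _ ≤ _ := measure_union_le _ _
    _ ≤ ENNReal.ofReal (√d + 1) + ENNReal.ofReal (√d + 1) :=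
      add_le_add (count_intCast_mem_Icc_le _ (Real.sqrt_nonneg d))
        (count_intCast_mem_Icc_le _ (Real.sqrt_nonneg d))
    _ = ENNReal.ofReal (2 * (√d + 1)) := by
      rw [← ENNReal.ofReal_add (by positivity) (by positivity), two_mul]

theorem quadratic_sub_quadratic {a : ℝ} (ha : a ≠ 0) (b c x y : ℝ) :
    (a * x ^ 2 + b * x + c) - (a * y ^ 2 + b * y + c) =
      a * ((x + b / (2 * a)) ^ 2 - (y + b / (2 * a)) ^ 2) := by
  field_simp
  ring

theorem add_sq_sub_add_sq_le_of_quadratic_mem {a : ℝ} (ha : a ≠ 0) (b c : ℝ) {I : Set ℝ}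
    (hI : I.OrdConnected) (hIb : Bornology.IsBounded I) {x y : ℝ}
    (hx : a * x ^ 2 + b * x + c ∈ I) (hy : a * y ^ 2 + b * y + c ∈ I) :
    (x + b / (2 * a)) ^ 2 - (y + b / (2 * a)) ^ 2 ≤ (volume I).toReal / |a| := by
  have h := abs_sub_le_toReal_volume hI hIb hx hy
  rw [quadratic_sub_quadratic ha, abs_mul] at h
  rw [le_div_iff₀ (abs_pos.2 ha), mul_comm]
  exact (mul_le_mul_of_nonneg_left (le_abs_self _) (abs_nonneg a)).trans h

/-- For `a ≠ 0` and a bounded interval `I`, the number of integers `q`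
with `a q² + b q + c ∈ I` is at most `2 (|I|^{1/2} / |a|^{1/2} + 1)`. -/
theorem count_quadratic_integer_preimage_le
    (a b c : ℝ) (ha : a ≠ 0)
    (I : Set ℝ) (hI : I.OrdConnected) (hIb : Bornology.IsBounded I) :
    Measure.count {q : ℤ | a * (q : ℝ) ^ 2 + b * (q : ℝ) + c ∈ I} ≤
      ENNReal.ofReal
        (2 * ((volume I).toReal ^ ((1 : ℝ) / 2) / |a| ^ ((1 : ℝ) / 2) + 1)) := by
  set T := {q : ℤ | a * (q : ℝ) ^ 2 + b * (q : ℝ) + c ∈ I}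
  obtain ⟨s, hs⟩ := exists_subset_Icc_add_of_forall_sub_le
    (S := (fun q : ℤ => ((q : ℝ) + b / (2 * a)) ^ 2) '' T) (d := (volume I).toReal / |a|)
    (by
      rintro _ ⟨q, hq, rfl⟩ _ ⟨q', hq', rfl⟩
      exact add_sq_sub_add_sq_le_of_quadratic_mem ha b c hI hIb hq hq')
  calc Measure.count T
      ≤ Measure.count
          {q : ℤ | ((q : ℝ) + b / (2 * a)) ^ 2 ∈ Icc s (s + (volume I).toReal / |a|)} :=
        measure_mono (image_subset_iff.1 hs)
    _ ≤ _ := count_intCast_add_sq_mem_Icc_le _ _ _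
    _ = _ := by rw [Real.sqrt_div' _ (abs_nonneg a), Real.sqrt_eq_rpow, Real.sqrt_eq_rpow]
end

section
/- Let τ, τ₁, q, q₁ be real numbers and let ξ, ξ₁ be real numbers with ξ ≠ 0, ξ₁ ≠ 0 and ξ − ξ₁ ≠ 0. Set σ = τ − ξ³ + q²/ξ, σ₁ = τ₁ − ξ₁³ + q₁²/ξ₁ and σ₂ = (τ − τ₁) − (ξ − ξ₁)³ + (q − q₁)²/(ξ − ξ₁). Then |σ − σ₁ − σ₂| = |3 ξ ξ₁ (ξ − ξ₁) + (ξ q₁ − ξ₁ q)² / (ξ ξ₁ (ξ − ξ₁))|, and moreover |σ − σ₁ − σ₂| ≥ 3 |ξ ξ₁ (ξ − ξ₁)|. -/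
/-!
With `D = ξ ξ₁ (ξ - ξ₁)`, clearing denominators gives `σ - σ₁ - σ₂ = -(3 D + (ξ q₁ - ξ₁ q)² / D)`.
Both summands have the sign of `D`, so they cannot cancel and the absolute value is at least `3 |D|`.
-/

theorem kpII_resonance_identity {τ τ₁ q q₁ ξ ξ₁ : ℝ} (hξ : ξ ≠ 0) (hξ₁ : ξ₁ ≠ 0)
    (hξξ₁ : ξ - ξ₁ ≠ 0) :
    (τ - ξ ^ 3 + q ^ 2 / ξ) - (τ₁ - ξ₁ ^ 3 + q₁ ^ 2 / ξ₁) -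
        ((τ - τ₁) - (ξ - ξ₁) ^ 3 + (q - q₁) ^ 2 / (ξ - ξ₁)) =
      -(3 * ξ * ξ₁ * (ξ - ξ₁) + (ξ * q₁ - ξ₁ * q) ^ 2 / (ξ * ξ₁ * (ξ - ξ₁))) := by
  field_simp
  ring

theorem mul_abs_le_abs_mul_add_sq_div {k : ℝ} (hk : 0 ≤ k) (D c : ℝ) :
    k * |D| ≤ |k * D + c ^ 2 / D| := by
  rcases le_total 0 D with hD | hD
  · have : 0 ≤ c ^ 2 / D := by positivity
    rw [abs_of_nonneg hD, abs_of_nonneg (by positivity)]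
    linarith
  · have : c ^ 2 / D ≤ 0 := div_nonpos_of_nonneg_of_nonpos (sq_nonneg c) hD
    rw [abs_of_nonpos hD, abs_of_nonpos (by nlinarith)]
    linarith

/-- the resonance relation for the KP-II dispersion relation. -/
theorem kpII_resonance_relation
    (τ τ₁ q q₁ ξ ξ₁ : ℝ) (hξ : ξ ≠ 0) (hξ₁ : ξ₁ ≠ 0) (hξξ₁ : ξ - ξ₁ ≠ 0) :
    |(τ - ξ ^ 3 + q ^ 2 / ξ) - (τ₁ - ξ₁ ^ 3 + q₁ ^ 2 / ξ₁) -
        ((τ - τ₁) - (ξ - ξ₁) ^ 3 + (q - q₁) ^ 2 / (ξ - ξ₁))| =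
      |3 * ξ * ξ₁ * (ξ - ξ₁) + (ξ * q₁ - ξ₁ * q) ^ 2 / (ξ * ξ₁ * (ξ - ξ₁))| ∧
    3 * |ξ * ξ₁ * (ξ - ξ₁)| ≤
      |(τ - ξ ^ 3 + q ^ 2 / ξ) - (τ₁ - ξ₁ ^ 3 + q₁ ^ 2 / ξ₁) -
        ((τ - τ₁) - (ξ - ξ₁) ^ 3 + (q - q₁) ^ 2 / (ξ - ξ₁))| := by
  rw [kpII_resonance_identity hξ hξ₁ hξξ₁, abs_neg]
  refine ⟨rfl, ?_⟩
  simpa only [mul_assoc] using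
    mul_abs_le_abs_mul_add_sq_div zero_le_three (ξ * ξ₁ * (ξ - ξ₁)) (ξ * q₁ - ξ₁ * q)
end

section
/- For every c₀ ≥ 1 there exists a constant C > 0 (depending only on c₀) with the following property. Let τ ∈ ℝ, ξ > 0, q ∈ ℤ, K₁, K₂ ≥ 1, M₁, M₂ ≥ 1, and let I₁, I₂ be intervals. Let B¹ be the set of (ξ₁, q₁) ∈ ℝ×ℤ such that ξ₁ ∈ I₁, ξ − ξ₁ ∈ I₂, M₁ ≤ ξ₁ ≤ 2M₁, M₂ ≤ ξ − ξ₁ ≤ 2M₂, ⟨τ − ξ³ + q²/ξ + 3 ξ ξ₁ (ξ − ξ₁) + (ξ q₁ − ξ₁ q)²/(ξ ξ₁ (ξ − ξ₁))⟩ ≤ c₀ (K₁∨K₂), and |q₁/ξ₁ − (q − q₁)/(ξ − ξ₁)| ≤ 1. Then μ(B¹) ≤ C · (K₁∨K₂)^{1/2} (M₁∧M₂)^{1/2}, where μ is the product of Lebesgue measure on ℝ and counting measure on ℤ. -/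
/-!
Write `h = ξ₁ (ξ - ξ₁) / ξ` and `y = q₁ - q ξ₁ / ξ`. The slope condition reads `|y| ≤ h`, and the
phase equals `3 ξ² h + y² / h - σ` with `σ = ξ³ - τ - q² / ξ`. Since `0 ≤ y² / h ≤ h ≤ 2 M` with
`M = M₁ ∧ M₂`, the phase condition confines `3 ξ² h`, hence `(ξ₁ - ξ / 2)²`, to a window of width
`O((K + M) / ξ)`, so `ξ₁` ranges over a set of measure `O(√((K + M) / ξ))`. For fixed `ξ₁`, `q₁`
lies in an interval of length `2 h ≤ 4 M`, and `y²` in a window of width `2 K h`, so there are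
`O(min(M, √(K M)))` choices of `q₁`. As `ξ ≥ 2 M`, the product of the two bounds is `O(√(K M))`.
-/

open MeasureTheory

/-- Japanese bracket `⟨x⟩ = (1+x²)^{1/2}`. -/
noncomputable def jb (x : ℝ) : ℝ := Real.sqrt (1 + x ^ 2)

open Set
open scoped ENNReal

theorem Real.sqrt_sub_sqrt_le_sqrt_sub (a b : ℝ) : √b - √a ≤ √(b - a) := by
  rcases le_total b a with hba | hab
  · linarith [Real.sqrt_le_sqrt hba, Real.sqrt_nonneg (b - a)]
  rcases lt_or_ge a 0 with ha | ha
  · rw [Real.sqrt_eq_zero_of_nonpos ha.le, sub_zero]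
    exact Real.sqrt_le_sqrt (by linarith)
  · rw [sub_le_iff_le_add, Real.sqrt_le_left (by positivity)]
    nlinarith [Real.sq_sqrt ha, Real.sq_sqrt (sub_nonneg.2 hab),
      mul_nonneg (Real.sqrt_nonneg (b - a)) (Real.sqrt_nonneg a)]

theorem count_intCast_mem_Icc_le_s12 (a b : ℝ) :
    Measure.count {n : ℤ | (n : ℝ) ∈ Icc a b} ≤ ENNReal.ofReal (b - a + 1) := by
  have hsub : {n : ℤ | (n : ℝ) ∈ Icc a b} ⊆ Finset.Icc ⌈a⌉ ⌊b⌋ := fun n hn => by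
    simp only [Finset.coe_Icc, mem_Icc, Int.ceil_le, Int.le_floor]
    exact hn
  refine (measure_mono hsub).trans ?_
  rw [Measure.count_apply_finset, Int.card_Icc, ← ENNReal.ofReal_natCast,
    ENNReal.ofReal_le_ofReal_iff']
  rcases le_total (⌊b⌋ + 1 - ⌈a⌉) 0 with h | h
  · right; simp [Int.toNat_of_nonpos h]
  · left
    rw [← Int.cast_natCast, Int.toNat_of_nonneg h]
    push_cast
    linarith [Int.floor_le b, Int.le_ceil a]

theorem mem_Icc_union_of_sq_mem_Icc {a b y : ℝ} (hy : y ^ 2 ∈ Icc a b) :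
    y ∈ Icc (-√b) (-√a) ∪ Icc (√a) (√b) := by
  have h₁ : √a ≤ |y| := Real.sqrt_sq_eq_abs y ▸ Real.sqrt_le_sqrt hy.1
  have h₂ : |y| ≤ √b := Real.sqrt_sq_eq_abs y ▸ Real.sqrt_le_sqrt hy.2
  rcases le_total y 0 with h | h
  · rw [abs_of_nonpos h] at h₁ h₂
    exact Or.inl ⟨by linarith, by linarith⟩
  · rw [abs_of_nonneg h] at h₁ h₂
    exact Or.inr ⟨h₁, h₂⟩

theorem volume_sub_sq_mem_Icc_le (a b c : ℝ) :
    volume {x : ℝ | (x - c) ^ 2 ∈ Icc a b} ≤ ENNReal.ofReal (2 * √(b - a)) := by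
  have hsub : {x : ℝ | (x - c) ^ 2 ∈ Icc a b} ⊆
      Icc (c - √b) (c - √a) ∪ Icc (c + √a) (c + √b) := fun x hx => by
    rcases mem_Icc_union_of_sq_mem_Icc hx with h | h
    · exact Or.inl ⟨by linarith [h.1], by linarith [h.2]⟩
    · exact Or.inr ⟨by linarith [h.1], by linarith [h.2]⟩
  have hlen := Real.sqrt_sub_sqrt_le_sqrt_sub a b
  calc _ ≤ volume (Icc (c - √b) (c - √a)) + volume (Icc (c + √a) (c + √b)) :=
        (measure_mono hsub).trans (measure_union_le _ _)
    _ ≤ ENNReal.ofReal (√(b - a)) + ENNReal.ofReal (√(b - a)) := by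
        rw [Real.volume_Icc, Real.volume_Icc]
        gcongr <;> linarith
    _ = _ := by rw [← ENNReal.ofReal_add (by positivity) (by positivity), two_mul]

theorem count_intCast_sub_sq_mem_Icc_le (a b c : ℝ) :
    Measure.count {n : ℤ | ((n : ℝ) - c) ^ 2 ∈ Icc a b} ≤ ENNReal.ofReal (2 * √(b - a) + 2) := by
  have hsub : {n : ℤ | ((n : ℝ) - c) ^ 2 ∈ Icc a b} ⊆
      {n : ℤ | (n : ℝ) ∈ Icc (c - √b) (c - √a)} ∪ {n : ℤ | (n : ℝ) ∈ Icc (c + √a) (c + √b)} :=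
    fun n hn => by
      rcases mem_Icc_union_of_sq_mem_Icc hn with h | h
      · exact Or.inl ⟨by linarith [h.1], by linarith [h.2]⟩
      · exact Or.inr ⟨by linarith [h.1], by linarith [h.2]⟩
  have hlen := Real.sqrt_sub_sqrt_le_sqrt_sub a b
  calc _ ≤ ENNReal.ofReal (c - √a - (c - √b) + 1) + ENNReal.ofReal (c + √b - (c + √a) + 1) :=
        (measure_mono hsub).trans ((measure_union_le _ _).trans
          (add_le_add (count_intCast_mem_Icc_le_s12 _ _) (count_intCast_mem_Icc_le_s12 _ _)))
    _ ≤ ENNReal.ofReal (√(b - a) + 1) + ENNReal.ofReal (√(b - a) + 1) := by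
        gcongr <;> linarith
    _ = _ := by rw [← ENNReal.ofReal_add (by positivity) (by positivity)]; ring_nf

theorem count_abs_intCast_sub_le_le (c r : ℝ) :
    Measure.count {n : ℤ | |(n : ℝ) - c| ≤ r} ≤ ENNReal.ofReal (2 * r + 1) := by
  refine le_trans (measure_mono fun n (hn : |(n : ℝ) - c| ≤ r) => ?_)
    ((count_intCast_mem_Icc_le_s12 (c - r) (c + r)).trans_eq (by ring_nf))
  exact ⟨by linarith [neg_abs_le ((n : ℝ) - c)], by linarith [le_abs_self ((n : ℝ) - c)]⟩

theorem MeasureTheory.Measure.prod_apply_le_mul_of_slice_le {α β : Type*} [MeasurableSpace α]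
    [MeasurableSpace β] {μ : Measure α} {ν : Measure β} [SFinite ν] {B : Set (α × β)}
    (hB : MeasurableSet B) {S : Set α} {N : ℝ≥0∞} (hBS : ∀ p ∈ B, p.1 ∈ S)
    (hN : ∀ x ∈ S, ν (Prod.mk x ⁻¹' B) ≤ N) : μ.prod ν B ≤ N * μ S := by
  have hslice : ∀ x, ν (Prod.mk x ⁻¹' B) ≤ S.indicator (fun _ => N) x := fun x => by
    by_cases hx : x ∈ S
    · simpa [hx] using hN x hx
    · have : Prod.mk x ⁻¹' B = ∅ := eq_empty_of_forall_notMem fun y hy => hx (hBS _ hy)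
      simp [this]
  rw [Measure.prod_apply hB]
  exact (lintegral_mono hslice).trans (lintegral_indicator_const_le S N)

theorem min_mul_sqrt_le {κ m ξ : ℝ} (hκ : 0 ≤ κ) (hm : 0 ≤ m) (hξ : 0 < ξ) (hξm : 2 * m ≤ ξ) :
    min (5 * m) (6 * √(κ * m)) * (2 * √((2 * κ + 2 * m) / (3 * ξ))) ≤ 10 * √(κ * m) := by
  set M := min (5 * m) (6 * √(κ * m))
  have hκm : 0 ≤ κ * m := mul_nonneg hκ hm
  have hM₀ : 0 ≤ M := le_min (by linarith) (by positivity)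
  have hM₁ : M ^ 2 ≤ 25 * m ^ 2 := by nlinarith [min_le_left (5 * m) (6 * √(κ * m))]
  have hM₂ : M ^ 2 ≤ 36 * (κ * m) := by
    nlinarith [min_le_right (5 * m) (6 * √(κ * m)), Real.sq_sqrt hκm, Real.sqrt_nonneg (κ * m)]
  have hMW : M ^ 2 * ((2 * κ + 2 * m) / (3 * ξ)) ≤ 25 * (κ * m) := by
    rw [mul_div_assoc', div_le_iff₀ (by positivity)]
    nlinarith [mul_le_mul_of_nonneg_right hM₁ (by positivity : (0 : ℝ) ≤ 2 * κ),
      mul_le_mul_of_nonneg_right hM₂ (by positivity : (0 : ℝ) ≤ 2 * m),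
      mul_le_mul_of_nonneg_left hξm hκm, mul_nonneg hκm hξ.le]
  have : (M * √((2 * κ + 2 * m) / (3 * ξ))) ^ 2 ≤ (5 * √(κ * m)) ^ 2 := by
    rw [mul_pow, mul_pow, Real.sq_sqrt (by positivity), Real.sq_sqrt hκm]; linarith
  nlinarith [abs_le_of_sq_le_sq this (by positivity),
    le_abs_self (M * √((2 * κ + 2 * m) / (3 * ξ)))]

noncomputable def reducedMass (ξ x : ℝ) : ℝ := x * (ξ - x) / ξ

theorem reducedMass_pos {ξ x : ℝ} (hx : 0 < x) (hxξ : x < ξ) : 0 < reducedMass ξ x :=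
  div_pos (mul_pos hx (sub_pos.2 hxξ)) (hx.trans hxξ)

theorem reducedMass_le_left {ξ x : ℝ} (hξ : 0 < ξ) : reducedMass ξ x ≤ x := by
  rw [reducedMass, div_le_iff₀ hξ]; nlinarith [sq_nonneg x]

theorem reducedMass_le_sub {ξ x : ℝ} (hξ : 0 < ξ) : reducedMass ξ x ≤ ξ - x := by
  rw [reducedMass, div_le_iff₀ hξ]; nlinarith [sq_nonneg (ξ - x)]

theorem sq_sub_half_eq {ξ x : ℝ} (hξ : ξ ≠ 0) :
    (x - ξ / 2) ^ 2 = ξ ^ 2 / 4 - ξ * reducedMass ξ x := by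
  rw [reducedMass]; field_simp; ring

/-- With `γ = q / ξ` and `σ = ξ³ - τ - q² / ξ`, the last two conditions are the slope and phase
conditions defining `B¹`, rewritten by `slope_eq` and `phase_eq`. -/
def resonantRegion (ξ γ σ κ m : ℝ) : Set (ℝ × ℤ) :=
  {p | 0 < p.1 ∧ p.1 < ξ ∧ reducedMass ξ p.1 ≤ 2 * m ∧
    |(p.2 : ℝ) - γ * p.1| ≤ reducedMass ξ p.1 ∧
    |3 * ξ ^ 2 * reducedMass ξ p.1 + ((p.2 : ℝ) - γ * p.1) ^ 2 / reducedMass ξ p.1 - σ| ≤ κ}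

theorem measurableSet_resonantRegion (ξ γ σ κ m : ℝ) :
    MeasurableSet (resonantRegion ξ γ σ κ m) := by
  unfold resonantRegion reducedMass; measurability

section resonantRegion

variable {ξ γ σ κ m : ℝ}

theorem count_slice_resonantRegion_le (hκ : 1 ≤ κ) (hm : 1 ≤ m) {x : ℝ} (hx : 0 < x)
    (hxξ : x < ξ) (hh : reducedMass ξ x ≤ 2 * m) :
    Measure.count (Prod.mk x ⁻¹' resonantRegion ξ γ σ κ m) ≤
      ENNReal.ofReal (min (5 * m) (6 * √(κ * m))) := by
  set h := reducedMass ξ x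
  have hpos : 0 < h := reducedMass_pos hx hxξ
  rw [ENNReal.ofReal_min]
  refine le_min ?_ ?_
  · exact (measure_mono (t := {n : ℤ | |(n : ℝ) - γ * x| ≤ h}) fun n hn => hn.2.2.2.1).trans
      ((count_abs_intCast_sub_le_le _ _).trans (ENNReal.ofReal_le_ofReal (by linarith)))
  · have hsub : Prod.mk x ⁻¹' resonantRegion ξ γ σ κ m ⊆
        {n : ℤ | ((n : ℝ) - γ * x) ^ 2 ∈
          Icc (h * (σ - κ - 3 * ξ ^ 2 * h)) (h * (σ + κ - 3 * ξ ^ 2 * h))} := by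
      intro n hn
      obtain ⟨hlo, hhi⟩ := abs_le.1 hn.2.2.2.2
      constructor
      · rw [← le_div_iff₀' hpos]; linarith
      · rw [← div_le_iff₀' hpos]; linarith
    refine (measure_mono hsub).trans ((count_intCast_sub_sq_mem_Icc_le _ _ _).trans
      (ENNReal.ofReal_le_ofReal ?_))
    have hκm : 1 ≤ √(κ * m) := Real.one_le_sqrt.2 (one_le_mul_of_one_le_of_one_le hκ hm)
    have h4 : √(4 * (κ * m)) = 2 * √(κ * m) := by
      rw [Real.sqrt_mul (by norm_num), show (4 : ℝ) = 2 ^ 2 by norm_num, Real.sqrt_sq (by norm_num)]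
    have : √(h * (σ + κ - 3 * ξ ^ 2 * h) - h * (σ - κ - 3 * ξ ^ 2 * h)) ≤ 2 * √(κ * m) :=
      h4 ▸ Real.sqrt_le_sqrt (by nlinarith)
    linarith

theorem sq_fst_sub_half_mem_Icc {p : ℝ × ℤ} (hξ : 0 < ξ) (hp : p ∈ resonantRegion ξ γ σ κ m) :
    (p.1 - ξ / 2) ^ 2 ∈
      Icc (ξ ^ 2 / 4 - (σ + κ) / (3 * ξ)) (ξ ^ 2 / 4 - (σ - κ - 2 * m) / (3 * ξ)) := by
  obtain ⟨hx, hxξ, hh, hy, hE⟩ := hp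
  set h := reducedMass ξ p.1
  set y := (p.2 : ℝ) - γ * p.1
  have hpos : 0 < h := reducedMass_pos hx hxξ
  have hy₀ : 0 ≤ y ^ 2 / h := by positivity
  have hy₁ : y ^ 2 / h ≤ h := by
    rw [div_le_iff₀ hpos]; nlinarith [abs_le.1 hy, sq_abs y, abs_nonneg y]
  obtain ⟨hlo, hhi⟩ := abs_le.1 hE
  rw [sq_sub_half_eq hξ.ne']
  constructor
  · rw [sub_le_sub_iff_left, le_div_iff₀ (by positivity)]; nlinarith
  · rw [sub_le_sub_iff_left, div_le_iff₀ (by positivity)]; nlinarith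

theorem measure_resonantRegion_le (hξ : 0 < ξ) (hκ : 1 ≤ κ) (hm : 1 ≤ m) (hξm : 2 * m ≤ ξ) :
    (volume.prod Measure.count) (resonantRegion ξ γ σ κ m) ≤ ENNReal.ofReal (10 * √(κ * m)) := by
  set a := ξ ^ 2 / 4 - (σ + κ) / (3 * ξ)
  set b := ξ ^ 2 / 4 - (σ - κ - 2 * m) / (3 * ξ)
  have hba : b - a = (2 * κ + 2 * m) / (3 * ξ) := by ring
  set S := {x : ℝ | 0 < x ∧ x < ξ ∧ reducedMass ξ x ≤ 2 * m ∧ (x - ξ / 2) ^ 2 ∈ Icc a b}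
  have hS : volume S ≤ ENNReal.ofReal (2 * √((2 * κ + 2 * m) / (3 * ξ))) :=
    hba ▸ (measure_mono fun x hx => hx.2.2.2).trans (volume_sub_sq_mem_Icc_le a b (ξ / 2))
  calc _ ≤ ENNReal.ofReal (min (5 * m) (6 * √(κ * m))) * volume S :=
        Measure.prod_apply_le_mul_of_slice_le (measurableSet_resonantRegion ξ γ σ κ m)
          (fun p hp => ⟨hp.1, hp.2.1, hp.2.2.1, sq_fst_sub_half_mem_Icc hξ hp⟩)
          (fun x hx => count_slice_resonantRegion_le hκ hm hx.1 hx.2.1 hx.2.2.1)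
    _ ≤ ENNReal.ofReal (min (5 * m) (6 * √(κ * m))) *
          ENNReal.ofReal (2 * √((2 * κ + 2 * m) / (3 * ξ))) := by gcongr
    _ = ENNReal.ofReal (min (5 * m) (6 * √(κ * m)) * (2 * √((2 * κ + 2 * m) / (3 * ξ)))) :=
        (ENNReal.ofReal_mul (le_min (by linarith) (by positivity))).symm
    _ ≤ _ := ENNReal.ofReal_le_ofReal (min_mul_sqrt_le (by linarith) (by linarith) hξ hξm)

end resonantRegion

theorem abs_le_jb (x : ℝ) : |x| ≤ jb x := by
  rw [jb, ← Real.sqrt_sq_eq_abs]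
  exact Real.sqrt_le_sqrt (by linarith)

theorem phase_eq {ξ x : ℝ} (hξ : ξ ≠ 0) (hx : x ≠ 0) (hξx : ξ - x ≠ 0) (τ q n : ℝ) :
    τ - ξ ^ 3 + q ^ 2 / ξ + 3 * ξ * x * (ξ - x) + (ξ * n - x * q) ^ 2 / (ξ * x * (ξ - x)) =
      3 * ξ ^ 2 * reducedMass ξ x + (n - q / ξ * x) ^ 2 / reducedMass ξ x -
        (ξ ^ 3 - τ - q ^ 2 / ξ) := by
  unfold reducedMass; field_simp; ring

theorem slope_eq {ξ x : ℝ} (hξ : ξ ≠ 0) (hx : x ≠ 0) (hξx : ξ - x ≠ 0) (q n : ℝ) :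
    n / x - (q - n) / (ξ - x) = (n - q / ξ * x) / reducedMass ξ x := by
  unfold reducedMass; field_simp; ring

theorem mk_mem_resonantRegion {τ ξ q x κ M₁ M₂ : ℝ} {n : ℤ} (hM₁ : 0 < M₁) (hM₂ : 0 < M₂)
    (hx : M₁ ≤ x) (hx' : x ≤ 2 * M₁) (hξx : M₂ ≤ ξ - x) (hξx' : ξ - x ≤ 2 * M₂)
    (hphase : jb (τ - ξ ^ 3 + q ^ 2 / ξ + 3 * ξ * x * (ξ - x) +
      (ξ * (n : ℝ) - x * q) ^ 2 / (ξ * x * (ξ - x))) ≤ κ)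
    (hslope : |(n : ℝ) / x - (q - n) / (ξ - x)| ≤ 1) :
    (x, n) ∈ resonantRegion ξ (q / ξ) (ξ ^ 3 - τ - q ^ 2 / ξ) κ (min M₁ M₂) := by
  have hx₀ : 0 < x := by linarith
  have hxξ : x < ξ := by linarith
  have hξ : 0 < ξ := by linarith
  have hpos := reducedMass_pos hx₀ hxξ
  rw [phase_eq hξ.ne' hx₀.ne' (by linarith) τ q n] at hphase
  rw [slope_eq hξ.ne' hx₀.ne' (by linarith) q n, abs_div, abs_of_pos hpos, div_le_one hpos]
    at hslope
  refine ⟨hx₀, hxξ, ?_, hslope, (abs_le_jb _).trans hphase⟩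
  rw [mul_min_of_nonneg _ _ zero_le_two]
  exact le_min ((reducedMass_le_left hξ).trans hx') ((reducedMass_le_sub hξ).trans hξx')

/-- size estimate for the region `B¹` (Lemma 2.4 / Lemma `lem1`). -/
theorem measure_B1_le (c₀ : ℝ) (hc₀ : 1 ≤ c₀) :
    ∃ C : ℝ, 0 < C ∧
      ∀ (τ ξ : ℝ) (q : ℤ) (K₁ K₂ M₁ M₂ : ℝ) (I₁ I₂ : Set ℝ),
        0 < ξ → 1 ≤ K₁ → 1 ≤ K₂ → 1 ≤ M₁ → 1 ≤ M₂ →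
        I₁.OrdConnected → I₂.OrdConnected →
        ((volume : Measure ℝ).prod Measure.count)
            {p : ℝ × ℤ | p.1 ∈ I₁ ∧ ξ - p.1 ∈ I₂ ∧
              M₁ ≤ p.1 ∧ p.1 ≤ 2 * M₁ ∧ M₂ ≤ ξ - p.1 ∧ ξ - p.1 ≤ 2 * M₂ ∧
              jb (τ - ξ ^ 3 + (q : ℝ) ^ 2 / ξ + 3 * ξ * p.1 * (ξ - p.1) +
                  (ξ * (p.2 : ℝ) - p.1 * (q : ℝ)) ^ 2 /
                    (ξ * p.1 * (ξ - p.1))) ≤ c₀ * max K₁ K₂ ∧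
              |(p.2 : ℝ) / p.1 - ((q : ℝ) - (p.2 : ℝ)) / (ξ - p.1)| ≤ 1} ≤
          ENNReal.ofReal
            (C * (max K₁ K₂) ^ ((1 : ℝ) / 2) * (min M₁ M₂) ^ ((1 : ℝ) / 2)) := by
  refine ⟨10 * √c₀, by positivity, fun τ ξ q K₁ K₂ M₁ M₂ I₁ I₂ hξ hK₁ hK₂ hM₁ hM₂ _ _ => ?_⟩
  have hκ : 1 ≤ c₀ * max K₁ K₂ := one_le_mul_of_one_le_of_one_le hc₀ (le_max_of_le_left hK₁)
  have hm : 1 ≤ min M₁ M₂ := le_min hM₁ hM₂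
  obtain hξm | hξm := lt_or_ge ξ (2 * min M₁ M₂)
  · refine (measure_mono_null (fun p hp => ?_) measure_empty).trans_le zero_le
    linarith [hp.2.2.1, hp.2.2.2.2.1, min_le_left M₁ M₂, min_le_right M₁ M₂]
  calc _ ≤ (volume.prod Measure.count) (resonantRegion ξ (q / ξ) (ξ ^ 3 - τ - q ^ 2 / ξ)
          (c₀ * max K₁ K₂) (min M₁ M₂)) :=
        measure_mono fun ⟨_, _⟩ ⟨_, _, hx, hx', hξx, hξx', hphase, hslope⟩ =>
          mk_mem_resonantRegion (by linarith) (by linarith) hx hx' hξx hξx' hphase hslope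
    _ ≤ ENNReal.ofReal (10 * √(c₀ * max K₁ K₂ * min M₁ M₂)) :=
        measure_resonantRegion_le hξ hκ hm hξm
    _ = _ := by
        rw [Real.sqrt_mul (by positivity), Real.sqrt_mul (by positivity), Real.sqrt_eq_rpow,
          Real.sqrt_eq_rpow, Real.sqrt_eq_rpow, mul_assoc, mul_assoc, mul_assoc]
end
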